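/- Let W(i) and W(k) be degenerate U-statistics in L⁴(P) of orders p_i and p_k, respectively, in the same independent sequence X_1,…,X_n, with Hoeffding components W_J(i) (J ∈ 𝓓_{p_i}) and W_K(k) (K ∈ 𝓓_{p_k}). Then for all J ∈ 𝓓_{p_i} and K ∈ 𝓓_{p_k}: E[ ( E[ W_J(i)·W_K(k) | 𝓕_{JΔK} ] )² ] ≤ σ_J(i)²·σ_K(k)², where JΔK = (J∖K) ∪ (K∖J) is the symmetric difference. -/

import Mathlib

/-! Write `f = W_J(i)`, `g = W_K(k)`, `A = J \ K`, `B = K \ J`. By the conditional Cauchy–Schwarz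
inequality, `E[fg | 𝓕_{A ∪ B}]² ≤ E[f² | 𝓕_{A ∪ B}] · E[g² | 𝓕_{A ∪ B}]`. Since `f` depends only on
`X_J` and `J` is disjoint from `B`, the variables `X_B` can be dropped from the first factor, which
becomes `E[f² | 𝓕_A]`; likewise the second becomes `E[g² | 𝓕_B]`. These two are independent, so the
expectation of their product is `E[f²] E[g²]`, and Hoeffding components of nonempty index sets are
centred, so this is `σ_J(i)² σ_K(k)²`. -/

open MeasureTheory ProbabilityTheory Finset Filter

noncomputable section

/-- The σ-algebra generated by the random variables `X j`, `j ∈ J`. -/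
def sigmaGen {Ω : Type*} {n : ℕ} {E : Fin n → Type*} [∀ i, MeasurableSpace (E i)]
    (X : ∀ i, Ω → E i) (J : Finset (Fin n)) : MeasurableSpace Ω :=
  ⨆ i ∈ J, MeasurableSpace.comap (X i) inferInstance

/-- The Hoeffding component of `W` indexed by `J`:
`W_J = ∑_{L ⊆ J} (-1)^{|J|-|L|} E[W | 𝓕_L]`. -/
noncomputable def hoeff {Ω : Type*} [MeasurableSpace Ω] {n : ℕ} {E : Fin n → Type*}
    [∀ i, MeasurableSpace (E i)] (μ : Measure Ω) (X : ∀ i, Ω → E i)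
    (W : Ω → ℝ) (J : Finset (Fin n)) : Ω → ℝ :=
  ∑ L ∈ J.powerset, ((-1 : ℝ) ^ (J.card - L.card)) • μ[W | sigmaGen X L]

/-- The collection `𝓓_d` of all `d`-subsets of `{1,…,n}`. -/
def DD (n d : ℕ) : Finset (Finset (Fin n)) :=
  Finset.univ.filter fun J => J.card = d

/-- `W` is a degenerate U-statistic of order `d` (w.r.t. the data `X`): its Hoeffding
decomposition is `W = ∑_{J ∈ 𝓓_d} W_J`. -/
def IsDegenUStat {Ω : Type*} [MeasurableSpace Ω] {n : ℕ} {E : Fin n → Type*}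
    [∀ i, MeasurableSpace (E i)] (μ : Measure Ω) (X : ∀ i, Ω → E i)
    (W : Ω → ℝ) (d : ℕ) : Prop :=
  W =ᵐ[μ] fun ω => ∑ J ∈ DD n d, hoeff μ X W J ω

/-- The influence quantity `ρ_n² = max_{1 ≤ i ≤ n} ∑_{J ∈ 𝓓_d, i ∈ J} Var(W_J)`. -/
noncomputable def rho2 {Ω : Type*} [MeasurableSpace Ω] {n : ℕ} {E : Fin n → Type*}
    [∀ i, MeasurableSpace (E i)] (μ : Measure Ω) (X : ∀ i, Ω → E i)
    (W : Ω → ℝ) (d : ℕ) : ℝ :=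
  ⨆ i : Fin n, ∑ J ∈ (DD n d).filter (fun J => i ∈ J), variance (hoeff μ X W J) μ

section CondCauchySchwarz

variable {Ω : Type*} {m mΩ : MeasurableSpace Ω} {μ : Measure Ω}

lemma sq_le_mul_of_forall_rat {a b c : ℝ} (h : ∀ q : ℚ, 0 ≤ a + 2 * q * b + q ^ 2 * c) :
    b ^ 2 ≤ a * c := by
  have hreal : ∀ x : ℝ, 0 ≤ c * (x * x) + 2 * b * x + a := fun x =>
    Rat.denseRange_cast.induction_on x (isClosed_le continuous_const (by fun_prop))
      fun q => by linarith [h q]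
  have hdisc := discrim_le_zero hreal
  rw [discrim] at hdisc
  linarith

lemma condExp_mul_sq_le {f g : Ω → ℝ} (hf : MemLp f 2 μ) (hg : MemLp g 2 μ) :
    (μ[f * g | m]) ^ 2 ≤ᵐ[μ] μ[f ^ 2 | m] * μ[g ^ 2 | m] := by
  have hfg : Integrable (f * g) μ := hf.integrable_mul hg
  have hf2 : Integrable (f ^ 2) μ := hf.integrable_sq
  have hg2 : Integrable (g ^ 2) μ := hg.integrable_sq
  -- `q` ranges over `ℚ` so that the a.e. statements for all `q` can be combined into one.
  have hquad : ∀ q : ℚ, ∀ᵐ ω ∂μ,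
      0 ≤ μ[f ^ 2 | m] ω + 2 * q * μ[f * g | m] ω + (q : ℝ) ^ 2 * μ[g ^ 2 | m] ω := by
    intro q
    have hexpand :
        (f + (q : ℝ) • g) ^ 2 = f ^ 2 + (2 * q : ℝ) • (f * g) + ((q : ℝ) ^ 2) • g ^ 2 := by
      ext ω; simp only [Pi.add_apply, Pi.smul_apply, Pi.mul_apply, Pi.pow_apply, smul_eq_mul]; ring
    have hlin : μ[(f + (q : ℝ) • g) ^ 2 | m] =ᵐ[μ]
        μ[f ^ 2 | m] + (2 * q : ℝ) • μ[f * g | m] + ((q : ℝ) ^ 2) • μ[g ^ 2 | m] := by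
      rw [hexpand]
      filter_upwards [condExp_add (hf2.add (hfg.smul (2 * q : ℝ))) (hg2.smul ((q : ℝ) ^ 2)) m,
        condExp_add hf2 (hfg.smul (2 * q : ℝ)) m, condExp_smul (2 * q : ℝ) (f * g) m,
        condExp_smul ((q : ℝ) ^ 2) (g ^ 2) m] with ω h₁ h₂ h₃ h₄
      simp only [h₁, h₂, h₃, h₄, Pi.add_apply]
    have hsq : 0 ≤ᵐ[μ] (f + (q : ℝ) • g) ^ 2 := Eventually.of_forall fun ω => sq_nonneg _
    filter_upwards [condExp_nonneg (m := m) hsq, hlin] with ω hnonneg hω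
    simpa [hω] using hnonneg
  filter_upwards [ae_all_iff.2 hquad] with ω hω
  exact sq_le_mul_of_forall_rat hω

end CondCauchySchwarz

section CondExpIndep

variable {Ω : Type*} {m₁ m₂ m₃ mΩ : MeasurableSpace Ω} {μ : Measure Ω}

lemma isPiSystem_image2_inter :
    IsPiSystem (Set.image2 (· ∩ ·) {t | MeasurableSet[m₂] t} {t | MeasurableSet[m₃] t}) := by
  rintro _ ⟨s₂, hs₂, s₃, hs₃, rfl⟩ _ ⟨t₂, ht₂, t₃, ht₃, rfl⟩ _
  exact ⟨s₂ ∩ t₂, hs₂.inter ht₂, s₃ ∩ t₃, hs₃.inter ht₃, Set.inter_inter_inter_comm _ _ _ _⟩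

lemma sup_eq_generateFrom_image2_inter :
    m₂ ⊔ m₃ = MeasurableSpace.generateFrom
      (Set.image2 (· ∩ ·) {t | MeasurableSet[m₂] t} {t | MeasurableSet[m₃] t}) := by
  refine le_antisymm (sup_le ?_ ?_) (MeasurableSpace.generateFrom_le ?_)
  · exact fun t ht => .basic _ ⟨t, ht, Set.univ, .univ, Set.inter_univ t⟩
  · exact fun t ht => .basic _ ⟨Set.univ, .univ, t, ht, Set.univ_inter t⟩
  · rintro _ ⟨t₂, ht₂, t₃, ht₃, rfl⟩
    exact (le_sup_left (b := m₃) _ ht₂).inter (le_sup_right (a := m₂) _ ht₃)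

lemma setIntegral_eq_setIntegral_of_isPiSystem {E : Type*} [NormedAddCommGroup E]
    [NormedSpace ℝ E] {m : MeasurableSpace Ω} {s : Set (Set Ω)} (hm : m ≤ mΩ)
    (h_eq : m = MeasurableSpace.generateFrom s) (h_inter : IsPiSystem s)
    (h_univ : Set.univ ∈ s) {f g : Ω → E} (hf : Integrable f μ) (hg : Integrable g μ)
    (basic : ∀ t ∈ s, ∫ x in t, f x ∂μ = ∫ x in t, g x ∂μ) {t : Set Ω}
    (ht : MeasurableSet[m] t) : ∫ x in t, f x ∂μ = ∫ x in t, g x ∂μ := by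
  have h_total : ∫ x, f x ∂μ = ∫ x, g x ∂μ := by
    simpa using basic _ h_univ
  induction t, ht using MeasurableSpace.induction_on_inter h_eq h_inter with
  | empty => simp
  | basic t ht => exact basic t ht
  | compl t ht ih =>
    have ht' := hm t ht
    rw [setIntegral_compl ht' hf, setIntegral_compl ht' hg, ih, h_total]
  | iUnion u hdisj hu ih =>
    have hu' := fun i => hm _ (hu i)
    rw [integral_iUnion hu' hdisj hf.integrableOn, integral_iUnion hu' hdisj hg.integrableOn]
    exact tsum_congr ih

variable [IsFiniteMeasure μ] {f : Ω → ℝ}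

lemma setIntegral_eq_measureReal_mul_integral_of_indep (hle₁ : m₁ ≤ mΩ) (hle₂ : m₂ ≤ mΩ)
    (hindep : Indep m₁ m₂ μ) (hf : StronglyMeasurable[m₁] f) (hfint : Integrable f μ)
    {t : Set Ω} (ht : MeasurableSet[m₂] t) :
    ∫ x in t, f x ∂μ = μ.real t * ∫ x, f x ∂μ := by
  rw [← setIntegral_condExp hle₂ hfint ht,
    setIntegral_congr_ae (hle₂ t ht) ((condExp_indep_eq hle₁ hle₂ hf hindep).mono fun _ h _ => h),
    setIntegral_const, smul_eq_mul]

lemma setIntegral_inter_eq_measureReal_mul_of_indep (hle₁ : m₁ ≤ mΩ) (hle₂ : m₂ ≤ mΩ)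
    (hle₃ : m₃ ≤ m₁) (hindep : Indep m₁ m₂ μ) (hf : StronglyMeasurable[m₁] f)
    (hfint : Integrable f μ) {t₂ t₃ : Set Ω} (ht₂ : MeasurableSet[m₂] t₂)
    (ht₃ : MeasurableSet[m₃] t₃) :
    ∫ x in t₂ ∩ t₃, f x ∂μ = μ.real t₂ * ∫ x in t₃, f x ∂μ := by
  have ht₃' := hle₁ _ (hle₃ _ ht₃)
  rw [← setIntegral_indicator ht₃', ← integral_indicator ht₃']
  exact setIntegral_eq_measureReal_mul_integral_of_indep hle₁ hle₂ hindep
    (hf.indicator (hle₃ _ ht₃)) (hfint.indicator ht₃') ht₂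

lemma condExp_sup_eq_of_indep (hle₁ : m₁ ≤ mΩ) (hle₂ : m₂ ≤ mΩ) (hle₃ : m₃ ≤ m₁)
    (hindep : Indep m₁ m₂ μ) (hf : StronglyMeasurable[m₁] f) (hfint : Integrable f μ) :
    μ[f | m₂ ⊔ m₃] =ᵐ[μ] μ[f | m₃] := by
  have hm₃ : m₃ ≤ mΩ := hle₃.trans hle₁
  refine (ae_eq_condExp_of_forall_setIntegral_eq (sup_le hle₂ hm₃) hfint
    (fun _ _ _ => integrable_condExp.integrableOn) (fun t ht _ => ?_)
    (stronglyMeasurable_condExp.mono (le_sup_right : m₃ ≤ m₂ ⊔ m₃)).aestronglyMeasurable).symm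
  refine setIntegral_eq_setIntegral_of_isPiSystem (sup_le hle₂ hm₃)
    sup_eq_generateFrom_image2_inter isPiSystem_image2_inter
    ⟨_, .univ, _, .univ, Set.inter_univ _⟩ integrable_condExp hfint ?_ ht
  rintro _ ⟨t₂, ht₂, t₃, ht₃, rfl⟩
  rw [setIntegral_inter_eq_measureReal_mul_of_indep hle₁ hle₂ hle₃ hindep
      (stronglyMeasurable_condExp.mono hle₃) integrable_condExp ht₂ ht₃,
    setIntegral_inter_eq_measureReal_mul_of_indep hle₁ hle₂ hle₃ hindep hf hfint ht₂ ht₃,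
    setIntegral_condExp hm₃ hfint ht₃]

end CondExpIndep

lemma sum_powerset_neg_one_pow_card_sub_card {α : Type*} {J : Finset α} (hJ : J.Nonempty) :
    ∑ L ∈ J.powerset, (-1 : ℝ) ^ (#J - #L) = 0 := by
  calc ∑ L ∈ J.powerset, (-1 : ℝ) ^ (#J - #L)
      = ∑ L ∈ J.powerset, (-1 : ℝ) ^ #J * (-1) ^ #L := sum_congr rfl fun L hL => by
        rw [pow_sub₀ _ (by norm_num) (card_le_card (mem_powerset.1 hL)), ← inv_pow, inv_neg_one]
    _ = (-1 : ℝ) ^ #J * ((∑ L ∈ J.powerset, (-1 : ℤ) ^ #L : ℤ) : ℝ) := by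
        push_cast; rw [mul_sum]
    _ = 0 := by rw [sum_powerset_neg_one_pow_card_of_nonempty hJ]; simp

section SigmaGen

variable {Ω : Type*} {n : ℕ} {E : Fin n → Type*} [∀ i, MeasurableSpace (E i)]
  {mΩ : MeasurableSpace Ω} {μ : Measure Ω} {X : ∀ i, Ω → E i}

lemma sigmaGen_le (hX : ∀ i, Measurable (X i)) (S : Finset (Fin n)) : sigmaGen X S ≤ mΩ :=
  iSup₂_le fun i _ => (hX i).comap_le

lemma sigmaGen_mono {S T : Finset (Fin n)} (h : S ⊆ T) : sigmaGen X S ≤ sigmaGen X T :=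
  biSup_mono fun _ hi => h hi

lemma sigmaGen_union (S T : Finset (Fin n)) :
    sigmaGen X (S ∪ T) = sigmaGen X S ⊔ sigmaGen X T :=
  Finset.iSup_union

lemma indep_sigmaGen_of_disjoint (hX : ∀ i, Measurable (X i)) (hindep : iIndepFun X μ)
    {S T : Finset (Fin n)} (hST : Disjoint S T) :
    Indep (sigmaGen X S) (sigmaGen X T) μ :=
  indep_iSup_of_disjoint (fun i => (hX i).comap_le) hindep (Finset.disjoint_coe.2 hST)

end SigmaGen

section Hoeffding

variable {Ω : Type*} {n : ℕ} {E : Fin n → Type*} [∀ i, MeasurableSpace (E i)]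
  {mΩ : MeasurableSpace Ω} {μ : Measure Ω} {X : ∀ i, Ω → E i} {W : Ω → ℝ}
  {J : Finset (Fin n)}

lemma stronglyMeasurable_hoeff : StronglyMeasurable[sigmaGen X J] (hoeff μ X W J) :=
  Finset.stronglyMeasurable_sum _ fun _ hL =>
    (stronglyMeasurable_condExp.mono (sigmaGen_mono (mem_powerset.1 hL))).const_smul _

lemma memLp_hoeff {p : ENNReal} (hp : 1 ≤ p) (hW : MemLp W p μ) : MemLp (hoeff μ X W J) p μ :=
  memLp_finsetSum' _ fun _ _ => (hW.condExp hp).const_smul _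

lemma integral_hoeff_eq_zero [IsFiniteMeasure μ] (hX : ∀ i, Measurable (X i))
    (hJ : J.Nonempty) : ∫ ω, hoeff μ X W J ω ∂μ = 0 := by
  simp only [hoeff, Finset.sum_apply, Pi.smul_apply, smul_eq_mul]
  rw [integral_finsetSum _ fun _ _ => integrable_condExp.const_mul _]
  simp only [integral_const_mul, integral_condExp (sigmaGen_le hX _)]
  rw [← sum_mul, sum_powerset_neg_one_pow_card_sub_card hJ, zero_mul]

end Hoeffding

lemma integral_sq_condExp_mul_le {Ω : Type*} {mf mg a b mΩ : MeasurableSpace Ω} {μ : Measure Ω}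
    [IsFiniteMeasure μ] (hmf : mf ≤ mΩ) (hmg : mg ≤ mΩ)
    (ha : a ≤ mf) (hb : b ≤ mg) (hf_b : Indep mf b μ) (hg_a : Indep mg a μ) (hab : Indep a b μ)
    {f g : Ω → ℝ} (hfm : StronglyMeasurable[mf] f) (hgm : StronglyMeasurable[mg] g)
    (hf : MemLp f 2 μ) (hg : MemLp g 2 μ) :
    ∫ ω, μ[f * g | a ⊔ b] ω ^ 2 ∂μ ≤ (∫ ω, f ω ^ 2 ∂μ) * ∫ ω, g ω ^ 2 ∂μ := by
  have hfa : μ[f ^ 2 | a ⊔ b] =ᵐ[μ] μ[f ^ 2 | a] := by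
    rw [sup_comm]
    exact condExp_sup_eq_of_indep hmf (hb.trans hmg) ha hf_b (hfm.pow 2) hf.integrable_sq
  have hgb : μ[g ^ 2 | a ⊔ b] =ᵐ[μ] μ[g ^ 2 | b] :=
    condExp_sup_eq_of_indep hmg (ha.trans hmf) hb hg_a (hgm.pow 2) hg.integrable_sq
  have hindep : IndepFun (μ[f ^ 2 | a]) (μ[g ^ 2 | b]) μ :=
    indep_of_indep_of_le_right (indep_of_indep_of_le_left hab
      stronglyMeasurable_condExp.measurable.comap_le) stronglyMeasurable_condExp.measurable.comap_le
  calc ∫ ω, μ[f * g | a ⊔ b] ω ^ 2 ∂μ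
      ≤ ∫ ω, μ[f ^ 2 | a] ω * μ[g ^ 2 | b] ω ∂μ := by
        refine integral_mono_of_nonneg (.of_forall fun ω => sq_nonneg _)
          (hindep.integrable_mul integrable_condExp integrable_condExp) ?_
        filter_upwards [condExp_mul_sq_le (m := a ⊔ b) hf hg, hfa, hgb] with ω hω hfω hgω
        simpa [hfω, hgω] using hω
    _ = (∫ ω, μ[f ^ 2 | a] ω ∂μ) * ∫ ω, μ[g ^ 2 | b] ω ∂μ :=
        hindep.integral_mul_eq_mul_integral integrable_condExp.aestronglyMeasurable
          integrable_condExp.aestronglyMeasurable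
    _ = (∫ ω, f ω ^ 2 ∂μ) * ∫ ω, g ω ^ 2 ∂μ := by
        rw [integral_condExp (ha.trans hmf), integral_condExp (hb.trans hmg)]
        rfl

theorem sq_condexp_product_le_general
    {Ω : Type*} [m0 : MeasurableSpace Ω] (μ : Measure Ω) [IsProbabilityMeasure μ]
    {n : ℕ} {E : Fin n → Type*} [∀ i, MeasurableSpace (E i)]
    (X : ∀ i, Ω → E i) (hX : ∀ i, Measurable (X i))
    (hindep : iIndepFun X μ)
    (pi pk : ℕ) (hpi : 1 ≤ pi) (hpk : 1 ≤ pk)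
    (Wi Wk : Ω → ℝ) (hWi4 : MemLp Wi 4 μ) (hWk4 : MemLp Wk 4 μ)
    (J K : Finset (Fin n)) (hJ : J ∈ DD n pi) (hK : K ∈ DD n pk) :
    ∫ ω, ((μ[(fun ω' => hoeff μ X Wi J ω' * hoeff μ X Wk K ω') |
          sigmaGen X ((J \ K) ∪ (K \ J))]) ω) ^ 2 ∂μ ≤
      variance (hoeff μ X Wi J) μ * variance (hoeff μ X Wk K) μ := by
  have hJne : J.Nonempty := card_pos.1 ((mem_filter.1 hJ).2 ▸ hpi)
  have hKne : K.Nonempty := card_pos.1 ((mem_filter.1 hK).2 ▸ hpk)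
  have hf : MemLp (hoeff μ X Wi J) 2 μ := memLp_hoeff one_le_two (hWi4.mono_exponent (by norm_num))
  have hg : MemLp (hoeff μ X Wk K) 2 μ := memLp_hoeff one_le_two (hWk4.mono_exponent (by norm_num))
  rw [sigmaGen_union, variance_of_integral_eq_zero hf.aemeasurable (integral_hoeff_eq_zero hX hJne),
    variance_of_integral_eq_zero hg.aemeasurable (integral_hoeff_eq_zero hX hKne)]
  exact integral_sq_condExp_mul_le (sigmaGen_le hX J) (sigmaGen_le hX K)
    (sigmaGen_mono sdiff_subset) (sigmaGen_mono sdiff_subset)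
    (indep_sigmaGen_of_disjoint hX hindep disjoint_sdiff)
    (indep_sigmaGen_of_disjoint hX hindep disjoint_sdiff)
    (indep_sigmaGen_of_disjoint hX hindep disjoint_sdiff_sdiff)
    stronglyMeasurable_hoeff stronglyMeasurable_hoeff hf hg

theorem sq_condexp_product_le
    {Ω : Type*} [m0 : MeasurableSpace Ω] (μ : Measure Ω) [IsProbabilityMeasure μ]
    {n : ℕ} {E : Fin n → Type*} [∀ i, MeasurableSpace (E i)]
    (X : ∀ i, Ω → E i) (hX : ∀ i, Measurable (X i))
    (hindep : iIndepFun X μ)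
    (pi pk : ℕ) (hpi : 1 ≤ pi) (hpin : pi ≤ n) (hpk : 1 ≤ pk) (hpkn : pk ≤ n)
    (Wi Wk : Ω → ℝ) (hWi4 : MemLp Wi 4 μ) (hWk4 : MemLp Wk 4 μ)
    (hdegi : IsDegenUStat μ X Wi pi) (hdegk : IsDegenUStat μ X Wk pk)
    (J K : Finset (Fin n)) (hJ : J ∈ DD n pi) (hK : K ∈ DD n pk) :
    ∫ ω, ((μ[(fun ω' => hoeff μ X Wi J ω' * hoeff μ X Wk K ω') |
          sigmaGen X ((J \ K) ∪ (K \ J))]) ω) ^ 2 ∂μ ≤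
      variance (hoeff μ X Wi J) μ * variance (hoeff μ X Wk K) μ :=
  sq_condexp_product_le_general (m0 := m0) μ X hX hindep pi pk hpi hpk Wi Wk hWi4 hWk4 J K hJ hK

end
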